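/- arXiv:1612.09476 — 2 statements merged into one kernel-verified Lean document; each statement's English description precedes it below -/
import Mathlib

section
/- Fix 1 ≤ i < M, m ≥ 1 and a ∈ ℂˣ, and keep the notation m_T and H for tableaux in ℬ₋(mϖ_i). Then for every T ∈ ℬ₋(mϖ_i) with T ≠ H, at least one of the following holds: (a) there exists 1 ≤ l ≤ m such that m_T · m_H⁻¹ = ∏_{j=1}^{l} A_{i,aq^{3−2j}}⁻¹; (b) m_T · m_H⁻¹ equals A_{i,aq}⁻¹ · A_{i+1,aq²}⁻¹ times an element of ℒ𝒬⁻; (c) i ≥ 2 and m_T · m_H⁻¹ equals A_{i,aq}⁻¹ · A_{i−1,aq²}⁻¹ times an element of ℒ𝒬⁻. -/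
open scoped Classical

noncomputable section

namespace QAS

/-- ℓ-weights: an `I`-tuple (indexed by `ℕ`, only indices `1,…,M+N` are relevant) of
rational functions together with a parity in `ℤ/2`.  The group law is componentwise
multiplication of rational functions and addition of parities. -/
abbrev LW : Type := (ℕ → RatFunc ℂ) × Multiplicative (ZMod 2)

/-- the variable `z` -/
def Z : RatFunc ℂ := RatFunc.X

/-- constant rational functions -/
def Cc (c : ℂ) : RatFunc ℂ := RatFunc.C c

/-- parity `|ε_j|` (indices are 1-based) -/
def par (M : ℕ) (j : ℕ) : ZMod 2 := if j ≤ M then 0 else 1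

/-- `q_j` -/
def qq (M : ℕ) (q : ℂ) (j : ℕ) : ℂ := if j ≤ M then q else q⁻¹

/-- `(ε_j, ε_j) = ±1` -/
def sgn (M : ℕ) (j : ℕ) : ℤ := if j ≤ M then 1 else -1

/-- `q̂_i` -/
def qhat (M : ℕ) (q : ℂ) (i : ℕ) : ℂ := if i = M then q⁻¹ else qq M q i

/-- `τ_i` -/
def tau (M N : ℕ) (q : ℂ) (i : ℕ) : ℂ :=
  if i ≤ M then q ^ ((M : ℤ) - N + 1 - i) else q ^ ((i : ℤ) - M + 1 - N)

/-- `θ_j` -/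
def theta (M N : ℕ) (q : ℂ) (j : ℕ) : ℂ :=
  if j ≤ M then q ^ (2 * ((M : ℤ) - N + 1 - j)) else q ^ (2 * ((j : ℤ) - M - N))

/-- `(ε_k, ε_l)` -/
def epsPair (M : ℕ) (k l : ℕ) : ℤ := if k = l then sgn M k else 0

/-- `(α_i, α_j)` where `α_i = ε_i - ε_{i+1}` -/
def alphaPair (M : ℕ) (i j : ℕ) : ℤ :=
  epsPair M i j - epsPair M i (j + 1) - epsPair M (i + 1) j + epsPair M (i + 1) (j + 1)

/-- the set of `j ∈ I₀` with `j ∼ i`, i.e. `|i - j| = 1` -/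
def nbr (M N : ℕ) (i : ℕ) : Finset ℕ :=
  (Finset.Icc 1 (M + N - 1)).filter fun j => j + 1 = i ∨ j = i + 1

/-- the ℓ-weight `⬜j_a` -/
def box (M N : ℕ) (q : ℂ) (j : ℕ) (a : ℂ) : LW :=
  (fun k => if k = j then
      Cc (qq M q j) * (1 - Cc (a * (theta M N q j)⁻¹ * (qq M q j)⁻¹) * Z) /
        (1 - Cc (a * (theta M N q j)⁻¹ * qq M q j) * Z)
    else 1,
   Multiplicative.ofAdd (par M j))

/-- the generalized simple root `A_{i,a}` -/
def Amat (M N : ℕ) (q : ℂ) (i : ℕ) (a : ℂ) : LW :=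
  (fun k =>
    if k = i then
      Cc (qq M q i) *
        (1 - Cc (a * tau M N q i * q⁻¹ * (theta M N q i)⁻¹ * (qq M q i)⁻¹) * Z) /
        (1 - Cc (a * tau M N q i * q⁻¹ * (theta M N q i)⁻¹ * qq M q i) * Z)
    else if k = i + 1 then
      Cc (qq M q (i + 1))⁻¹ *
        (1 - Cc (a * tau M N q i * q⁻¹ * (theta M N q i)⁻¹ * qq M q i * qq M q (i + 1) ^ 2) * Z) /
        (1 - Cc (a * tau M N q i * q⁻¹ * (theta M N q i)⁻¹ * qq M q i) * Z)
    else 1,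
   Multiplicative.ofAdd (par M i + par M (i + 1)))

/-- the prefundamental ℓ-weight `Ψ_{i,a}` -/
def Psi (M N : ℕ) (q : ℂ) (i : ℕ) (a : ℂ) : LW :=
  (fun k =>
    if i ≤ M then (if 1 ≤ k ∧ k ≤ i then 1 - Cc (a * (tau M N q i)⁻¹) * Z else 1)
    else (if i < k ∧ k ≤ M + N then (1 - Cc (a * (tau M N q i)⁻¹) * Z)⁻¹ else 1),
   1)

/-- the ℓ-weight `[a]_i` -/
def bra (M N : ℕ) (i : ℕ) (a : ℂ) : LW :=
  (fun k =>
    if i ≤ M then (if 1 ≤ k ∧ k ≤ i then Cc a else 1)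
    else (if i < k ∧ k ≤ M + N then Cc a⁻¹ else 1),
   1)

/-- the ℓ-weight `𝔴^{(i)}_{c,a} = [c]_i Ψ_{i,ac⁻²} Ψ_{i,a}⁻¹` -/
def wAsym (M N : ℕ) (q : ℂ) (i : ℕ) (c a : ℂ) : LW :=
  bra M N i c * Psi M N q i (a * (c ^ 2)⁻¹) * (Psi M N q i a)⁻¹

/-- the ℓ-weight `𝔫^{(i)}_{c,a}` -/
def nAsym (M N : ℕ) (q : ℂ) (i : ℕ) (c a : ℂ) : LW :=
  wAsym M N q i (qhat M q i) (a * qhat M q i ^ 2) *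
    ∏ j ∈ nbr M N i, wAsym M N q j ((c ^ alphaPair M i j)⁻¹) (a * q ^ alphaPair M i j)

/-- a scalar rational function viewed as an ℓ-weight (all relevant components equal to it,
parity `0̄`) -/
def scalarLW (M N : ℕ) (h : RatFunc ℂ) : LW :=
  (fun k => if 1 ≤ k ∧ k ≤ M + N then h else 1, 1)

/-- equivalence of ℓ-weights: `f ≡ g` iff `f g⁻¹ = ((h p_1, …, h p_κ); s)` with `h`
regular and nonvanishing at `z = 0` and `p_k ∈ ℂˣ` -/
def lequiv (M N : ℕ) (f g : LW) : Prop :=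
  ∃ h : RatFunc ℂ, Polynomial.eval 0 h.denom ≠ 0 ∧ Polynomial.eval 0 h.num ≠ 0 ∧
    ∃ p : ℕ → ℂ, ∀ k, 1 ≤ k → k ≤ M + N → p k ≠ 0 ∧ f.1 k * (g.1 k)⁻¹ = h * Cc (p k)

/-- substitution `z ↦ cz` in a rational function -/
def scaleVar (c : ℂ) (f : RatFunc ℂ) : RatFunc ℂ :=
  Polynomial.eval₂ (RatFunc.C : ℂ →+* RatFunc ℂ) (Cc c * Z) f.num /
    Polynomial.eval₂ (RatFunc.C : ℂ →+* RatFunc ℂ) (Cc c * Z) f.denom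

/-- `C_i(f)(z) = ∏_{j=i}^{κ} f_j(zθ_j)^{(ε_j,ε_j)}` -/
def CFun (M N : ℕ) (q : ℂ) (i : ℕ) (f : LW) : RatFunc ℂ :=
  ∏ j ∈ Finset.Icc i (M + N), scaleVar (theta M N q j) (f.1 j) ^ sgn M j

/-- `t_1 = θ_1` and `t_i = τ_{i-1}² q⁻²` for `i > 1` -/
def tSmall (M N : ℕ) (q : ℂ) (i : ℕ) : ℂ :=
  if i = 1 then theta M N q 1 else tau M N q (i - 1) ^ 2 * (q ^ 2)⁻¹

/-- the ℓ-weights `⬜j*_a`, defined by `⬜1*_a = (⬜1_{aθ_1})⁻¹` and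
`⬜(i+1)*_a = ⬜i*_a · A_{i, aτ_i q⁻¹}` -/
def boxStar (M N : ℕ) (q : ℂ) : ℕ → ℂ → LW
  | 0, _ => 1
  | 1, a => (box M N q 1 (a * theta M N q 1))⁻¹
  | i + 2, a => boxStar M N q (i + 1) a * Amat M N q (i + 1) (a * tau M N q (i + 1) * q⁻¹)

/-- auxiliary downwards recursion for `⬜j′_a`; the argument is `κ - j` -/
def boxPrimeAux (M N : ℕ) (q : ℂ) (a : ℂ) : ℕ → LW
  | 0 => (box M N q (M + N) a)⁻¹
  | d + 1 => boxPrimeAux M N q a d *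
      (Amat M N q (M + N - (d + 1)) (a * tau M N q (M + N - (d + 1)) * q⁻¹))⁻¹

/-- the ℓ-weights `⬜j′_a`, defined by `⬜κ′_a = (⬜κ_a)⁻¹` and
`⬜(i+1)′_a = ⬜i′_a · A_{i, aτ_i q⁻¹}` -/
def boxPrime (M N : ℕ) (q : ℂ) (j : ℕ) (a : ℂ) : LW := boxPrimeAux M N q a (M + N - j)

/-- `q^λ` as an ℓ-weight, for `λ ∈ ℤ^I` -/
def qpow (M N : ℕ) (q : ℂ) (lam : ℕ → ℤ) : LW :=
  (fun k => if 1 ≤ k ∧ k ≤ M + N then Cc (q ^ (lam k * sgn M k)) else 1,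
   Multiplicative.ofAdd
     (((∑ k ∈ Finset.Icc 1 (M + N), if k ≤ M then (0 : ℤ) else lam k) : ZMod 2)))

/-- the fundamental weight `ϖ_i` for `i ≤ M` -/
def varpi (i : ℕ) : ℕ → ℤ := fun k => if 1 ≤ k ∧ k ≤ i then 1 else 0

/-- `Y_{i,a}` for `i ≤ M` -/
def YLW (M N : ℕ) (q : ℂ) (i : ℕ) (a : ℂ) : LW :=
  qpow M N q (varpi i) * Psi M N q i (a * (qq M q i)⁻¹) * (Psi M N q i (a * qq M q i))⁻¹

/-- `ϖ^{(i)}_{m,a}` for `i ≤ M` -/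
def varpiLW (M N : ℕ) (q : ℂ) (i m : ℕ) (a : ℂ) : LW :=
  qpow M N q (fun k => (m : ℤ) * varpi i k) *
    Psi M N q i (a * qq M q i ^ (1 - 2 * (m : ℤ))) * (Psi M N q i (a * qq M q i))⁻¹

/-- the submonoid `ℒ𝒬⁻` generated by the `A_{j,b}⁻¹` -/
def LQneg (M N : ℕ) (q : ℂ) : Submonoid LW :=
  Submonoid.closure
    {w | ∃ j : ℕ, ∃ b : ℂ, 1 ≤ j ∧ j ≤ M + N - 1 ∧ b ≠ 0 ∧ w = (Amat M N q j b)⁻¹}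

/-- `λ ∈ 𝒫` (1-based coordinates; `λ_j = 0` outside `1,…,M+N`) -/
def inP (M N : ℕ) (lam : ℕ → ℕ) : Prop :=
  lam 0 = 0 ∧ (∀ j, M + N < j → lam j = 0) ∧
  (∀ k l, 1 ≤ k → k ≤ l → l ≤ M → lam l ≤ lam k) ∧
  (∀ k l, M + 1 ≤ k → k ≤ l → l ≤ M + N → lam l ≤ lam k) ∧
  (∀ j, 1 ≤ j → j ≤ N → 0 < lam (M + j) → j ≤ lam M)

/-- the Young diagram `Y₊^λ ⊂ ℤ_{>0}²` -/
def Yp (M N : ℕ) (lam : ℕ → ℕ) : Set (ℕ × ℕ) :=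
  {p | 1 ≤ p.1 ∧ 1 ≤ p.2 ∧
    ((p.1 ≤ M ∧ p.2 ≤ lam p.1) ∨ (M < p.1 ∧ p.2 ≤ N ∧ p.1 ≤ M + lam (M + p.2)))}

/-- `Y₋^λ = -Y₊^λ ⊂ ℤ_{<0}²` -/
def YnZ (M N : ℕ) (lam : ℕ → ℕ) : Set (ℤ × ℤ) :=
  {p | ∃ k l : ℕ, (k, l) ∈ Yp M N lam ∧ p = (-(k : ℤ), -(l : ℤ))}

/-- tableau conditions on a domain `Y ⊂ ℤ²`, with entries in `{1,…,kap}` and the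
strictness threshold `MM` (tableaux are encoded as functions `ℤ × ℤ → ℕ`
vanishing off `Y`) -/
def isTab (MM kap : ℕ) (Y : Set (ℤ × ℤ)) (T : ℤ × ℤ → ℕ) : Prop :=
  (∀ p, p ∉ Y → T p = 0) ∧
  (∀ p ∈ Y, 1 ≤ T p ∧ T p ≤ kap) ∧
  (∀ p ∈ Y, ∀ p' ∈ Y, p.1 ≤ p'.1 → p.2 ≤ p'.2 → T p ≤ T p') ∧
  (∀ p ∈ Y, (p.1 + 1, p.2) ∈ Y → T p ≤ MM → T p < T (p.1 + 1, p.2)) ∧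
  (∀ p ∈ Y, (p.1, p.2 + 1) ∈ Y → MM < T p → T p < T (p.1, p.2 + 1))

/-- the set of tableaux `ℬ₋(λ)` -/
def Bneg (M N : ℕ) (lam : ℕ → ℕ) : Set (ℤ × ℤ → ℕ) :=
  {T | isTab M (M + N) (YnZ M N lam) T}

/-- `mϖ_j`: the first `j` coordinates equal `m`, the others vanish -/
def wt (j m : ℕ) : ℕ → ℕ := fun k => if 1 ≤ k ∧ k ≤ j then m else 0

/-- `m_T = ∏_{k=1}^{i} ∏_{l=1}^{m} ⬜T(-k,-l)_{aτ_i q^{2(k-l)}}` for `T ∈ ℬ₋(mϖ_i)` -/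
def mTab (M N : ℕ) (q : ℂ) (i m : ℕ) (a : ℂ) (T : ℤ × ℤ → ℕ) : LW :=
  ∏ k ∈ Finset.Icc 1 i, ∏ l ∈ Finset.Icc 1 m,
    box M N q (T (-(k : ℤ), -(l : ℤ))) (a * tau M N q i * q ^ (2 * ((k : ℤ) - l)))

/-- the highest tableau `H ∈ ℬ₋(mϖ_i)`, `H(-k,-l) = i + 1 - k` -/
def Htab (i m : ℕ) : ℤ × ℤ → ℕ := fun p =>
  if 1 ≤ -p.1 ∧ -p.1 ≤ (i : ℤ) ∧ 1 ≤ -p.2 ∧ -p.2 ≤ (m : ℤ) then i + 1 - (-p.1).toNat else 0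

/-- `m_T = ∏_{(i,j) ∈ Y₋^λ} ⬜T(i,j)_{aq^{2(j-i)+1}}` for `T ∈ ℬ₋(λ)`, written as a
product over a bounding rectangle of the Young diagram -/
def mTgen (M N : ℕ) (q : ℂ) (lam : ℕ → ℕ) (a : ℂ) (T : ℤ × ℤ → ℕ) : LW :=
  ∏ k ∈ Finset.Icc 1 (M + lam (M + 1)), ∏ l ∈ Finset.Icc 1 (max (lam 1) N),
    if (k, l) ∈ Yp M N lam then
      box M N q (T (-(k : ℤ), -(l : ℤ))) (a * q ^ (2 * ((k : ℤ) - l) + 1))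
    else 1

/-- the normalization factor `f^{(i)}_{c,a}(z)` -/
def fRF (M N : ℕ) (q : ℂ) (i : ℕ) (c a : ℂ) : RatFunc ℂ :=
  if i ≤ M then 1 - Cc (a * q ^ ((M : ℤ) - N - i - 1)) * Z
  else (1 - Cc (a * (c ^ 2)⁻¹ * q ^ ((M : ℤ) + N - i - 1)) * Z) *
      (1 - Cc (a * q ^ ((i : ℤ) - M - N - 1)) * Z) /
      (1 - Cc (a * q ^ ((M : ℤ) + N - i - 1)) * Z)


section Aux

open Finset

variable {M N : ℕ} {q : ℂ}

lemma lin_ne (c : ℂ) : (1 : RatFunc ℂ) - Cc c * Z ≠ 0 := by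
  have h : ((1 : Polynomial ℂ) - Polynomial.C c * Polynomial.X) ≠ 0 := by
    intro h
    have := congrArg (fun p => Polynomial.coeff p 0) h
    simp at this
  simpa [Cc, Z, map_sub, map_mul, RatFunc.algebraMap_C, RatFunc.algebraMap_X] using
    RatFunc.algebraMap_ne_zero (K := ℂ) h

lemma Cc_ne {c : ℂ} (h : c ≠ 0) : Cc c ≠ 0 := by
  simpa [Cc, RatFunc.algebraMap_C] using
    RatFunc.algebraMap_ne_zero (K := ℂ) (mt Polynomial.C_eq_zero.mp h)

lemma bxx_ne {c : ℂ} (hc : c ≠ 0) (d e : ℂ) :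
    Cc c * (1 - Cc d * Z) / (1 - Cc e * Z) ≠ 0 :=
  div_ne_zero (mul_ne_zero (Cc_ne hc) (lin_ne d)) (lin_ne e)

lemma qq_ne (hq : q ≠ 0) (j : ℕ) : qq M q j ≠ 0 := by
  unfold qq; split <;> simp [hq]

lemma tau_ne (hq : q ≠ 0) (j : ℕ) : tau M N q j ≠ 0 := by
  unfold tau; split <;> exact zpow_ne_zero _ hq

lemma theta_ne (hq : q ≠ 0) (j : ℕ) : theta M N q j ≠ 0 := by
  unfold theta; split <;> exact zpow_ne_zero _ hq

lemma theta_mul (hq : q ≠ 0) (j : ℕ) :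
    theta M N q j = theta M N q (j + 1) * (qq M q j * qq M q (j + 1)) := by
  unfold theta qq
  by_cases h1 : j + 1 ≤ M
  · rw [if_pos (show j ≤ M by omega), if_pos h1, if_pos (show j ≤ M by omega), if_pos h1,
      show (2 * ((M : ℤ) - N + 1 - j)) = 2 * ((M : ℤ) - N + 1 - ((j+1:ℕ):ℤ)) + 1 + 1 by
        push_cast; ring,
      zpow_add₀ hq, zpow_add₀ hq, zpow_one]
    ring
  · by_cases h2 : j ≤ M
    · have hjM : j = M := by omega
      rw [if_pos h2, if_neg h1, if_pos h2, if_neg h1,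
        show (2 * ((M : ℤ) - N + 1 - j)) = 2 * (((j+1:ℕ):ℤ) - (M:ℤ) - N) by
          rw [hjM]; push_cast; ring]
      field_simp
    · rw [if_neg h2, if_neg h1, if_neg h2, if_neg h1,
        show (2 * ((j : ℤ) - M - N)) = 2 * (((j+1:ℕ):ℤ) - (M:ℤ) - N) + (-1) + (-1) by
          push_cast; ring,
        zpow_add₀ hq, zpow_add₀ hq, zpow_neg_one]
      ring

lemma tau_succ (hq : q ≠ 0) {j : ℕ} (h : j + 1 ≤ M) :
    tau M N q j = q * tau M N q (j + 1) := by
  unfold tau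
  rw [if_pos (by omega : j ≤ M), if_pos h,
    show ((M : ℤ) - N + 1 - j) = 1 + ((M : ℤ) - N + 1 - ((j+1:ℕ):ℤ)) by push_cast; ring,
    zpow_add₀ hq, zpow_one]

end Aux
section Step

open Finset

variable {M N : ℕ} {q : ℂ}

lemma zmod2_fact : ∀ x y : ZMod 2, y = x + -(x + y) := by decide

lemma bx_invinv {s : ℂ} (hs : s ≠ 0) (u v : ℂ) :
    Cc s * (1 - Cc u * Z) / (1 - Cc v * Z)
      = 1 * (Cc s⁻¹ * (1 - Cc v * Z) / (1 - Cc u * Z))⁻¹ := by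
  have h1 := lin_ne u
  have h2 := lin_ne v
  have h3 := Cc_ne hs
  rw [show Cc s⁻¹ = (Cc s)⁻¹ from map_inv₀ (RatFunc.C (K := ℂ)) s]
  field_simp

lemma box_step (hq : q ≠ 0) {a' : ℂ} (j : ℕ) :
    box M N q (j + 1) a' = box M N q j a' * (Amat M N q j (a' * q * (tau M N q j)⁻¹))⁻¹ := by
  have hτ := tau_ne (M := M) (N := N) hq j
  have hq1 := qq_ne (M := M) hq (j + 1)
  have hq0 := qq_ne (M := M) hq j
  have hθ := theta_ne (M := M) (N := N) hq j
  have hθ1 := theta_ne (M := M) (N := N) hq (j + 1)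
  have hb : a' * q * (tau M N q j)⁻¹ * tau M N q j * q⁻¹ = a' := by field_simp
  have htm := theta_mul (M := M) (N := N) hq j
  have key1 : a' * (theta M N q (j+1))⁻¹ * (qq M q (j+1))⁻¹
      = a' * (theta M N q j)⁻¹ * qq M q j := by
    rw [htm]; field_simp
  have key2 : a' * (theta M N q (j+1))⁻¹ * qq M q (j+1)
      = a' * (theta M N q j)⁻¹ * qq M q j * qq M q (j+1) ^ 2 := by
    rw [htm]; field_simp
  unfold box Amat
  refine Prod.ext ?_ ?_
  · funext k
    simp only [Prod.fst_mul, Prod.fst_inv, Pi.mul_apply, Pi.inv_apply]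
    rw [hb]
    by_cases h1 : k = j + 1
    · subst h1
      rw [if_pos rfl, if_neg (by omega), if_neg (by omega), if_pos rfl, key1, key2]
      exact bx_invinv hq1 _ _
    · by_cases h2 : k = j
      · subst h2
        rw [if_neg (by omega), if_pos rfl, if_pos rfl]
        rw [eq_comm, mul_inv_cancel₀ (bxx_ne hq0 _ _)]
      · rw [if_neg h1, if_neg h2, if_neg h2, if_neg h1]
        simp
  · simp only [Prod.snd_mul, Prod.snd_inv]
    rw [← ofAdd_neg, ← ofAdd_add]
    exact congrArg Multiplicative.ofAdd (zmod2_fact _ _)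

lemma box_self (hq : q ≠ 0) {a' : ℂ} (c : ℕ) :
    box M N q c a' * (box M N q c a')⁻¹ = 1 := by
  unfold box
  refine Prod.ext ?_ ?_
  · funext k
    simp only [Prod.fst_mul, Prod.fst_inv, Pi.mul_apply, Pi.inv_apply, Prod.fst_one, Pi.one_apply]
    by_cases h : k = c
    · rw [if_pos h, mul_inv_cancel₀ (bxx_ne (qq_ne hq c) _ _)]
    · rw [if_neg h]; simp
  · simp only [Prod.snd_mul, Prod.snd_inv, Prod.snd_one]
    exact mul_inv_cancel _

lemma box_teles (hq : q ≠ 0) {a' : ℂ} (ha' : a' ≠ 0) (c : ℕ) :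
    ∀ b, c ≤ b → box M N q b a' * (box M N q c a')⁻¹ =
      ∏ j ∈ Finset.Ico c b, (Amat M N q j (a' * q * (tau M N q j)⁻¹))⁻¹ := by
  intro b hb
  induction b, hb using Nat.le_induction with
  | base => rw [box_self hq, Finset.Ico_self, Finset.prod_empty]
  | succ b hcb ih =>
      rw [box_step hq, Finset.prod_Ico_succ_top hcb, ← ih, mul_right_comm]

end Step
section Tab

open Finset

variable {M N i m : ℕ} {T : ℤ × ℤ → ℕ}

lemma mem_Yp (hiM : i < M) {k l : ℕ} :
    (k, l) ∈ Yp M N (wt i m) ↔ 1 ≤ k ∧ k ≤ i ∧ 1 ≤ l ∧ l ≤ m := by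
  unfold Yp wt
  simp only [Set.mem_setOf_eq]
  constructor
  · rintro ⟨hk, hl, h | h⟩
    · by_cases hki : k ≤ i
      · rw [if_pos ⟨hk, hki⟩] at h
        exact ⟨hk, hki, hl, h.2⟩
      · rw [if_neg (fun hc => hki hc.2)] at h
        omega
    · rcases h with ⟨hMk, _, hkM⟩
      rw [if_neg (by omega)] at hkM
      omega
  · rintro ⟨hk, hki, hl, hlm⟩
    exact ⟨hk, hl, Or.inl ⟨by omega, by rw [if_pos ⟨hk, hki⟩]; exact hlm⟩⟩

lemma mem_YnZ (hiM : i < M) {k l : ℕ} (hk : 1 ≤ k) (hki : k ≤ i) (hl : 1 ≤ l) (hlm : l ≤ m) :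
    ((-(k : ℤ), -(l : ℤ)) : ℤ × ℤ) ∈ YnZ M N (wt i m) :=
  ⟨k, l, (mem_Yp hiM).2 ⟨hk, hki, hl, hlm⟩, rfl⟩

lemma Htab_eval {k l : ℕ} (hk : 1 ≤ k) (hki : k ≤ i) (hl : 1 ≤ l) (hlm : l ≤ m) :
    Htab i m (-(k : ℤ), -(l : ℤ)) = i + 1 - k := by
  unfold Htab
  simp only [neg_neg]
  rw [if_pos (show (1:ℤ) ≤ (k:ℤ) ∧ (k:ℤ) ≤ (i:ℤ) ∧ 1 ≤ (l:ℤ) ∧ (l:ℤ) ≤ (m:ℤ) by omega)]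
  simp

lemma Htab_zero (hiM : i < M) {p : ℤ × ℤ} (hp : p ∉ YnZ M N (wt i m)) : Htab i m p = 0 := by
  unfold Htab
  rw [if_neg]
  intro ⟨h1, h2, h3, h4⟩
  apply hp
  refine ⟨(-p.1).toNat, (-p.2).toNat, (mem_Yp hiM).2 ⟨by omega, by omega, by omega, by omega⟩, ?_⟩
  have e1 : ((( -p.1).toNat : ℤ)) = -p.1 := Int.toNat_of_nonneg (by omega)
  have e2 : ((( -p.2).toNat : ℤ)) = -p.2 := Int.toNat_of_nonneg (by omega)
  rw [Prod.ext_iff]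
  constructor <;> simp [e1, e2]

lemma tab_ub (hiM : i < M) (hT : isTab M (M + N) (YnZ M N (wt i m)) T)
    {k l : ℕ} (hk : 1 ≤ k) (hki : k ≤ i) (hl : 1 ≤ l) (hlm : l ≤ m) :
    1 ≤ T (-(k : ℤ), -(l : ℤ)) ∧ T (-(k : ℤ), -(l : ℤ)) ≤ M + N :=
  hT.2.1 _ (mem_YnZ hiM hk hki hl hlm)

lemma tab_mono (hiM : i < M) (hT : isTab M (M + N) (YnZ M N (wt i m)) T)
    {k k' l l' : ℕ} (hk' : 1 ≤ k') (hk : k' ≤ k) (hki : k ≤ i)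
    (hl' : 1 ≤ l') (hl : l' ≤ l) (hlm : l ≤ m) :
    T (-(k : ℤ), -(l : ℤ)) ≤ T (-(k' : ℤ), -(l' : ℤ)) :=
  hT.2.2.1 _ (mem_YnZ hiM (by omega) hki (by omega) hlm)
    _ (mem_YnZ hiM hk' (by omega) hl' (by omega)) (by simp; omega) (by simp; omega)

lemma tab_col (hiM : i < M) (hT : isTab M (M + N) (YnZ M N (wt i m)) T)
    {k l : ℕ} (hk : 1 ≤ k) (hk1 : k + 1 ≤ i) (hl : 1 ≤ l) (hlm : l ≤ m)
    (hMc : T (-((k + 1 : ℕ) : ℤ), -(l : ℤ)) ≤ M) :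
    T (-((k + 1 : ℕ) : ℤ), -(l : ℤ)) < T (-(k : ℤ), -(l : ℤ)) := by
  have e : (((-((k + 1 : ℕ) : ℤ), -(l : ℤ)) : ℤ × ℤ).1 + 1, ((-((k + 1 : ℕ) : ℤ), -(l : ℤ)) : ℤ × ℤ).2)
      = ((-(k : ℤ), -(l : ℤ)) : ℤ × ℤ) := by
    rw [Prod.ext_iff]
    refine ⟨?_, rfl⟩
    show -((k + 1 : ℕ) : ℤ) + 1 = -(k : ℤ)
    push_cast; ring
  have h4 := hT.2.2.2.1 (-((k + 1 : ℕ) : ℤ), -(l : ℤ))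
    (mem_YnZ hiM (by omega) (by omega) hl hlm) (by rw [e]; exact mem_YnZ hiM hk (by omega) hl hlm) hMc
  rw [e] at h4
  exact h4

lemma tab_low (hiM : i < M) (hT : isTab M (M + N) (YnZ M N (wt i m)) T) :
    ∀ d k l : ℕ, i = k + d → 1 ≤ k → 1 ≤ l → l ≤ m →
      i + 1 ≤ T (-(k : ℤ), -(l : ℤ)) + k := by
  intro d
  induction d with
  | zero =>
      intro k l hkd hk hl hlm
      have h1 := (tab_ub hiM hT hk (by omega) hl hlm).1
      omega
  | succ d ih =>
      intro k l hkd hk hl hlm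
      have h1 := ih (k + 1) l (by omega) (by omega) hl hlm
      by_cases hMc : T (-((k + 1 : ℕ) : ℤ), -(l : ℤ)) ≤ M
      · have h2 := tab_col hiM hT hk (by omega) hl hlm hMc
        omega
      · have h2 := tab_mono (k := k + 1) (k' := k) (l := l) (l' := l) hiM hT hk (by omega)
          (by omega) hl le_rfl hlm
        omega

lemma tab_upcol (hiM : i < M) (hT : isTab M (M + N) (YnZ M N (wt i m)) T)
    (hm : 1 ≤ m) {k0 : ℕ} (hk0 : 1 ≤ k0) (hk0i : k0 ≤ i)
    (hM0 : T (-(k0 : ℤ), -((1 : ℕ) : ℤ)) ≤ M) :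
    ∀ k, k0 ≤ k → k ≤ i →
      T (-(k : ℤ), -((1 : ℕ) : ℤ)) + k ≤ T (-(k0 : ℤ), -((1 : ℕ) : ℤ)) + k0 := by
  intro k hk
  induction k, hk using Nat.le_induction with
  | base => intro; omega
  | succ k hk ih =>
      intro hki
      have h1 := ih (by omega)
      have h2 : T (-((k + 1 : ℕ) : ℤ), -((1 : ℕ) : ℤ)) ≤ M :=
        le_trans (tab_mono (k := k + 1) (k' := k0) (l := 1) (l' := 1) hiM hT hk0 (by omega)
          (by omega) le_rfl le_rfl hm) hM0
      have h3 := tab_col hiM hT (by omega) (by omega) (le_refl 1) hm h2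
      omega

end Tab
section Master

open Finset

variable {M N i m : ℕ} {q a : ℂ} {T : ℤ × ℤ → ℕ}

lemma master (hq : q ≠ 0) (ha : a ≠ 0) (hi : 1 ≤ i) (hiM : i < M)
    (hT : isTab M (M + N) (YnZ M N (wt i m)) T) :
    mTab M N q i m a T * (mTab M N q i m a (Htab i m))⁻¹
      = ∏ k ∈ Icc 1 i, ∏ l ∈ Icc 1 m, ∏ j ∈ Ico (i + 1 - k) (T (-(k : ℤ), -(l : ℤ))),
          (Amat M N q j
            (a * tau M N q i * q ^ (2 * ((k : ℤ) - (l : ℤ))) * q * (tau M N q j)⁻¹))⁻¹ := by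
  unfold mTab
  have hH : (∏ k ∈ Icc 1 i, ∏ l ∈ Icc 1 m,
        box M N q (Htab i m (-(k : ℤ), -(l : ℤ))) (a * tau M N q i * q ^ (2 * ((k : ℤ) - (l : ℤ)))))
      = ∏ k ∈ Icc 1 i, ∏ l ∈ Icc 1 m,
        box M N q (i + 1 - k) (a * tau M N q i * q ^ (2 * ((k : ℤ) - (l : ℤ)))) := by
    refine Finset.prod_congr rfl fun k hk => Finset.prod_congr rfl fun l hl => ?_
    rw [mem_Icc] at hk hl
    rw [Htab_eval hk.1 hk.2 hl.1 hl.2]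
  rw [hH, ← Finset.prod_inv_distrib, ← Finset.prod_mul_distrib]
  refine Finset.prod_congr rfl fun k hk => ?_
  rw [← Finset.prod_inv_distrib, ← Finset.prod_mul_distrib]
  refine Finset.prod_congr rfl fun l hl => ?_
  rw [mem_Icc] at hk hl
  have ha' : a * tau M N q i * q ^ (2 * ((k : ℤ) - (l : ℤ))) ≠ 0 :=
    mul_ne_zero (mul_ne_zero ha (tau_ne hq i)) (zpow_ne_zero _ hq)
  exact box_teles hq ha' (i + 1 - k) _
    (by have := tab_low hiM hT (i - k) k l (by omega) hk.1 hl.1 hl.2; omega)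

end Master
section Helpers

open Finset

variable {M N i m : ℕ} {q a : ℂ}

lemma Icc_split {β : Type*} [CommMonoid β] (F : ℕ → β) {c d : ℕ} (h : c ≤ d) :
    ∏ x ∈ Icc c d, F x = F c * ∏ x ∈ Icc (c + 1) d, F x := by
  rw [← Finset.Ico_add_one_right_eq_Icc, Finset.prod_eq_prod_Ico_succ_bot (by omega), Finset.Ico_add_one_right_eq_Icc]

lemma Ico_split {β : Type*} [CommMonoid β] (F : ℕ → β) {c d : ℕ} (h : c < d) :
    ∏ x ∈ Ico c d, F x = F c * ∏ x ∈ Ico (c + 1) d, F x :=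
  Finset.prod_eq_prod_Ico_succ_bot h F

lemma A_mem {j : ℕ} (hj1 : 1 ≤ j) (hj2 : j + 1 ≤ M + N) {b : ℂ} (hb : b ≠ 0) :
    (Amat M N q j b)⁻¹ ∈ LQneg M N q :=
  Submonoid.subset_closure ⟨j, b, hj1, by omega, hb, rfl⟩

lemma barg_ne (hq : q ≠ 0) (ha : a ≠ 0) (e : ℤ) (j : ℕ) :
    a * tau M N q i * q ^ e * q * (tau M N q j)⁻¹ ≠ 0 :=
  mul_ne_zero (mul_ne_zero (mul_ne_zero (mul_ne_zero ha (tau_ne hq i))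
    (zpow_ne_zero _ hq)) hq) (inv_ne_zero (tau_ne hq j))

lemma gam1 (hq : q ≠ 0) :
    a * tau M N q i * q ^ (2 * (((1 : ℕ) : ℤ) - ((1 : ℕ) : ℤ))) * q * (tau M N q i)⁻¹
      = a * q := by
  have h := tau_ne (M := M) (N := N) hq i
  rw [show (2 * (((1 : ℕ) : ℤ) - ((1 : ℕ) : ℤ))) = (0 : ℤ) by norm_num, zpow_zero]
  field_simp

lemma gam2 (hq : q ≠ 0) (hiM : i + 1 ≤ M) :
    a * tau M N q i * q ^ (2 * (((1 : ℕ) : ℤ) - ((1 : ℕ) : ℤ))) * q * (tau M N q (i + 1))⁻¹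
      = a * q ^ 2 := by
  have h := tau_ne (M := M) (N := N) hq (i + 1)
  rw [tau_succ hq hiM,
    show (2 * (((1 : ℕ) : ℤ) - ((1 : ℕ) : ℤ))) = (0 : ℤ) by norm_num, zpow_zero]
  field_simp

lemma gam3 (hq : q ≠ 0) (hi2 : 2 ≤ i) (hiM : i < M) :
    a * tau M N q i * q ^ (2 * (((2 : ℕ) : ℤ) - ((1 : ℕ) : ℤ))) * q * (tau M N q (i - 1))⁻¹
      = a * q ^ 2 := by
  have h := tau_ne (M := M) (N := N) hq i
  have e : i - 1 + 1 = i := by omega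
  have ht : tau M N q (i - 1) = q * tau M N q i := by
    have := tau_succ (M := M) (N := N) hq (j := i - 1) (by omega)
    rwa [e] at this
  rw [ht, show (2 * (((2 : ℕ) : ℤ) - ((1 : ℕ) : ℤ))) = ((2 : ℕ) : ℤ) by norm_num, zpow_natCast]
  field_simp

lemma gam4 (hq : q ≠ 0) (l : ℕ) :
    a * tau M N q i * q ^ (2 * (((1 : ℕ) : ℤ) - (l : ℤ))) * q * (tau M N q i)⁻¹
      = a * q ^ (3 - 2 * (l : ℤ)) := by
  have h := tau_ne (M := M) (N := N) hq i
  rw [show (3 - 2 * (l : ℤ)) = 2 * (((1 : ℕ) : ℤ) - (l : ℤ)) + 1 by push_cast; ring,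
    zpow_add₀ hq, zpow_one]
  field_simp

lemma shuffle1 {β : Type*} [CommMonoid β] (A B R1 R2 R3 : β) :
    (A * (B * R1) * R2) * R3 = A * B * (R1 * (R2 * R3)) := by
  simp [mul_assoc]

lemma shuffle2 {β : Type*} [CommMonoid β] (A R1 C R2 R3 : β) :
    (A * R1) * ((C * R2) * R3) = A * C * (R1 * (R2 * R3)) := by
  simp only [mul_assoc]
  rw [mul_left_comm R1 C]

end Helpers
section Mem

open Finset

variable {M N i : ℕ} {q a : ℂ}

lemma prodA_mem (hq : q ≠ 0) (ha : a ≠ 0) (c d : ℕ) (hc : 1 ≤ c) (hd : d ≤ M + N) (e : ℤ) :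
    (∏ j ∈ Ico c d,
      (Amat M N q j (a * tau M N q i * q ^ e * q * (tau M N q j)⁻¹))⁻¹) ∈ LQneg M N q := by
  refine Submonoid.prod_mem _ fun j hj => ?_
  rw [mem_Ico] at hj
  exact A_mem (by omega) (by omega) (barg_ne hq ha e j)

end Mem
open Finset in
/-- refined description of `m_T m_H⁻¹` for `T ∈ ℬ₋(mϖ_i)`, `1 ≤ i < M`. -/
theorem statement10 (M N : ℕ) (hM : 1 ≤ M) (hN : 1 ≤ N) (q : ℂ) (hq : q ≠ 0)
    (hroot : ∀ n : ℕ, 0 < n → q ^ n ≠ 1) (i m : ℕ) (hi : 1 ≤ i) (hiM : i < M)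
    (hm : 1 ≤ m) (a : ℂ) (ha : a ≠ 0) :
    ∀ T ∈ Bneg M N (wt i m), T ≠ Htab i m →
      (∃ l : ℕ, 1 ≤ l ∧ l ≤ m ∧
        mTab M N q i m a T * (mTab M N q i m a (Htab i m))⁻¹ =
          ∏ j ∈ Finset.Icc 1 l, (Amat M N q i (a * q ^ (3 - 2 * (j : ℤ))))⁻¹) ∨
      (∃ n ∈ LQneg M N q,
        mTab M N q i m a T * (mTab M N q i m a (Htab i m))⁻¹ =
          (Amat M N q i (a * q))⁻¹ * (Amat M N q (i + 1) (a * q ^ 2))⁻¹ * n) ∨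
      (2 ≤ i ∧ ∃ n ∈ LQneg M N q,
        mTab M N q i m a T * (mTab M N q i m a (Htab i m))⁻¹ =
          (Amat M N q i (a * q))⁻¹ * (Amat M N q (i - 1) (a * q ^ 2))⁻¹ * n) := by
  intro T hTmem hTH
  have hT : isTab M (M + N) (YnZ M N (wt i m)) T := hTmem
  have hmaster := master (T := T) (m := m) (a := a) hq ha hi hiM hT
  have hlow := tab_low hiM hT
  have ht1ge : i ≤ T (-((1 : ℕ) : ℤ), -((1 : ℕ) : ℤ)) := by
    have := hlow (i - 1) 1 1 (by omega) le_rfl le_rfl hm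
    omega
  have hub11 := (tab_ub hiM hT le_rfl hi le_rfl hm).2
  by_cases hcb : i + 2 ≤ T (-((1 : ℕ) : ℤ), -((1 : ℕ) : ℤ))
  · -- case (b)
    refine Or.inr (Or.inl ?_)
    rw [Icc_split _ hi, show i + 1 - 1 = i from rfl] at hmaster
    rw [Icc_split _ hm] at hmaster
    rw [Ico_split _ (show i < T (-((1 : ℕ) : ℤ), -((1 : ℕ) : ℤ)) by omega)] at hmaster
    rw [Ico_split _ (show i + 1 < T (-((1 : ℕ) : ℤ), -((1 : ℕ) : ℤ)) by omega)] at hmaster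
    rw [gam1 hq, gam2 hq (by omega)] at hmaster
    rw [shuffle1] at hmaster
    refine ⟨_, ?_, hmaster⟩
    refine Submonoid.mul_mem _ (prodA_mem hq ha _ _ (by omega) hub11 _)
      (Submonoid.mul_mem _ ?_ ?_)
    · refine Submonoid.prod_mem _ fun l hl => ?_
      rw [mem_Icc] at hl
      exact prodA_mem hq ha _ _ hi (tab_ub hiM hT le_rfl hi (by omega) hl.2).2 _
    · refine Submonoid.prod_mem _ fun k hk => Submonoid.prod_mem _ fun l hl => ?_
      rw [mem_Icc] at hk hl
      exact prodA_mem hq ha _ _ (by omega) (tab_ub hiM hT (by omega) hk.2 hl.1 hl.2).2 _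
  · -- T(-1,-1) ≤ i + 1 now
    have caseA : T (-((1 : ℕ) : ℤ), -((1 : ℕ) : ℤ)) = i + 1 →
        (i = 1 ∨ T (-((2 : ℕ) : ℤ), -((1 : ℕ) : ℤ)) = i - 1) →
        (∃ l : ℕ, 1 ≤ l ∧ l ≤ m ∧
          mTab M N q i m a T * (mTab M N q i m a (Htab i m))⁻¹ =
            ∏ j ∈ Finset.Icc 1 l, (Amat M N q i (a * q ^ (3 - 2 * (j : ℤ))))⁻¹) := by
      intro ht1 hsub
      have hrow : ∀ k l : ℕ, 2 ≤ k → k ≤ i → 1 ≤ l → l ≤ m →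
          T (-(k : ℤ), -(l : ℤ)) = i + 1 - k := by
        intro k l hk2 hki hl hlm
        rcases hsub with h1 | h2
        · omega
        · have hup := tab_upcol hiM hT hm (k0 := 2) (by omega) (by omega)
            (by rw [h2]; omega) k hk2 hki
          have hlo := hlow (i - k) k l (by omega) (by omega) hl hlm
          have hmo := tab_mono (k := k) (k' := k) (l := l) (l' := 1) hiM hT (by omega)
            le_rfl hki le_rfl hl hlm
          rw [h2] at hup
          omega
      set S := (Icc 1 m).filter (fun l : ℕ => T (-((1 : ℕ) : ℤ), -(l : ℤ)) = i + 1) with hSdef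
      have h1S : 1 ∈ S := by
        rw [hSdef, mem_filter, mem_Icc]
        exact ⟨⟨le_rfl, hm⟩, ht1⟩
      have hSne : S.Nonempty := ⟨1, h1S⟩
      set l₀ := S.max' hSne with hl0def
      have hl0S := S.max'_mem hSne
      have hl0m : l₀ ≤ m := by
        have h := (mem_filter.1 hl0S).1
        rw [mem_Icc] at h
        exact h.2
      have hl01 : 1 ≤ l₀ := Finset.le_max' S 1 h1S
      have hl0v : T (-((1 : ℕ) : ℤ), -(l₀ : ℤ)) = i + 1 := (mem_filter.1 hl0S).2
      have hrow1 : ∀ l : ℕ, 1 ≤ l → l ≤ m →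
          T (-((1 : ℕ) : ℤ), -(l : ℤ)) = if l ≤ l₀ then i + 1 else i := by
        intro l hl hlm
        by_cases hc : l ≤ l₀
        · rw [if_pos hc]
          have h1 := tab_mono (k := 1) (k' := 1) (l := l₀) (l' := l) hiM hT le_rfl le_rfl hi
            hl hc hl0m
          have h2 := tab_mono (k := 1) (k' := 1) (l := l) (l' := 1) hiM hT le_rfl le_rfl hi
            le_rfl hl hlm
          rw [hl0v] at h1
          rw [ht1] at h2
          omega
        · rw [if_neg hc]
          have h2 := tab_mono (k := 1) (k' := 1) (l := l) (l' := 1) hiM hT le_rfl le_rfl hi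
            le_rfl hl hlm
          rw [ht1] at h2
          have hlo := hlow (i - 1) 1 l (by omega) le_rfl hl hlm
          have hne : T (-((1 : ℕ) : ℤ), -(l : ℤ)) ≠ i + 1 := by
            intro hEq
            exact hc (Finset.le_max' S l (mem_filter.2 ⟨mem_Icc.2 ⟨hl, hlm⟩, hEq⟩))
          omega
      refine ⟨l₀, hl01, hl0m, ?_⟩
      rw [Icc_split _ hi, show i + 1 - 1 = i from rfl] at hmaster
      have hrest : (∏ k ∈ Icc (1 + 1) i, ∏ l ∈ Icc 1 m,
          ∏ j ∈ Ico (i + 1 - k) (T (-(k : ℤ), -(l : ℤ))),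
            (Amat M N q j
              (a * tau M N q i * q ^ (2 * ((k : ℤ) - (l : ℤ))) * q * (tau M N q j)⁻¹))⁻¹) = 1 := by
        refine Finset.prod_eq_one fun k hk => Finset.prod_eq_one fun l hl => ?_
        rw [mem_Icc] at hk hl
        rw [hrow k l (by omega) hk.2 hl.1 hl.2, Finset.Ico_self, Finset.prod_empty]
      rw [hrest, mul_one] at hmaster
      have hfirst : (∏ l ∈ Icc 1 m,
          ∏ j ∈ Ico i (T (-((1 : ℕ) : ℤ), -(l : ℤ))),
            (Amat M N q j
              (a * tau M N q i * q ^ (2 * (((1 : ℕ) : ℤ) - (l : ℤ))) * q * (tau M N q j)⁻¹))⁻¹)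
          = ∏ l ∈ Icc 1 m,
              (if l ≤ l₀ then (Amat M N q i (a * q ^ (3 - 2 * (l : ℤ))))⁻¹ else 1) := by
        refine Finset.prod_congr rfl fun l hl => ?_
        rw [mem_Icc] at hl
        rw [hrow1 l hl.1 hl.2]
        by_cases hc : l ≤ l₀
        · rw [if_pos hc, if_pos hc, show Ico i (i + 1) = {i} from by ext x; simp only [Finset.mem_Ico, Finset.mem_singleton]; omega,
            Finset.prod_singleton, gam4 hq l]
        · rw [if_neg hc, if_neg hc, Finset.Ico_self, Finset.prod_empty]
      rw [hfirst] at hmaster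
      rw [← Finset.prod_subset (Finset.Icc_subset_Icc_right hl0m)
        (fun x hx hnx => if_neg (by rw [mem_Icc] at hx; simp only [mem_Icc] at hnx; omega))]
        at hmaster
      rw [hmaster]
      exact Finset.prod_congr rfl fun l hl => if_pos (by rw [mem_Icc] at hl; exact hl.2)
    by_cases hA : T (-((1 : ℕ) : ℤ), -((1 : ℕ) : ℤ)) = i + 1
    · by_cases hi1 : i = 1
      · exact Or.inl (caseA hA (Or.inl hi1))
      · have hi2 : 2 ≤ i := by omega
        have ht2lb := hlow (i - 2) 2 1 (by omega) (by omega) le_rfl hm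
        have ht2ub : T (-((2 : ℕ) : ℤ), -((1 : ℕ) : ℤ)) ≤ i := by
          have hmo := tab_mono (k := 2) (k' := 1) (l := 1) (l' := 1) hiM hT le_rfl (by omega)
            hi2 le_rfl le_rfl hm
          by_cases hc : T (-((2 : ℕ) : ℤ), -((1 : ℕ) : ℤ)) ≤ M
          · have hcc := tab_col (k := 1) (l := 1) hiM hT le_rfl hi2 le_rfl hm
              (by rw [show ((1 : ℕ) + 1) = (2 : ℕ) from rfl]; exact hc)
            rw [show ((1 : ℕ) + 1) = (2 : ℕ) from rfl] at hcc
            omega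
          · rw [hA] at hmo
            omega
        by_cases hc2 : T (-((2 : ℕ) : ℤ), -((1 : ℕ) : ℤ)) = i
        · -- case (c)
          refine Or.inr (Or.inr ⟨hi2, ?_⟩)
          rw [Icc_split _ hi, show i + 1 - 1 = i from rfl] at hmaster
          rw [Icc_split _ (show 1 + 1 ≤ i from hi2), show (1 + 1 : ℕ) = (2 : ℕ) from rfl,
            show i + 1 - 2 = i - 1 from by omega] at hmaster
          rw [Icc_split _ hm] at hmaster
          rw [Icc_split _ hm] at hmaster
          rw [hA, hc2] at hmaster
          rw [show Ico i (i + 1) = {i} from by ext x; simp only [Finset.mem_Ico, Finset.mem_singleton]; omega,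
            show Ico (i - 1) i = {i - 1} from by ext x; simp only [Finset.mem_Ico, Finset.mem_singleton]; omega,
            Finset.prod_singleton, Finset.prod_singleton] at hmaster
          rw [gam1 hq, gam3 hq hi2 hiM] at hmaster
          rw [shuffle2] at hmaster
          refine ⟨_, ?_, hmaster⟩
          refine Submonoid.mul_mem _ ?_ (Submonoid.mul_mem _ ?_ ?_)
          · refine Submonoid.prod_mem _ fun l hl => ?_
            rw [mem_Icc] at hl
            exact prodA_mem hq ha _ _ hi (tab_ub hiM hT le_rfl hi (by omega) hl.2).2 _
          · refine Submonoid.prod_mem _ fun l hl => ?_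
            rw [mem_Icc] at hl
            exact prodA_mem hq ha _ _ (by omega)
              (tab_ub hiM hT (by omega) hi2 (by omega) hl.2).2 _
          · refine Submonoid.prod_mem _ fun k hk => Submonoid.prod_mem _ fun l hl => ?_
            rw [mem_Icc] at hk hl
            exact prodA_mem hq ha _ _ (by omega) (tab_ub hiM hT (by omega) hk.2 hl.1 hl.2).2 _
        · have hc2' : T (-((2 : ℕ) : ℤ), -((1 : ℕ) : ℤ)) = i - 1 := by omega
          exact Or.inl (caseA hA (Or.inr hc2'))
    · -- T(-1,-1) = i : then T = Htab, contradiction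
      exfalso
      apply hTH
      have ht1 : T (-((1 : ℕ) : ℤ), -((1 : ℕ) : ℤ)) ≤ i := by omega
      have hcol1 := tab_upcol hiM hT hm (k0 := 1) le_rfl hi (by omega)
      have hval : ∀ k l : ℕ, 1 ≤ k → k ≤ i → 1 ≤ l → l ≤ m →
          T (-(k : ℤ), -(l : ℤ)) = i + 1 - k := by
        intro k l hk hki hl hlm
        have h1 := hcol1 k hk hki
        have h2 := hlow (i - k) k l (by omega) hk hl hlm
        have h3 := tab_mono (k := k) (k' := k) (l := l) (l' := 1) hiM hT hk le_rfl hki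
          le_rfl hl hlm
        omega
      funext p
      by_cases hp : p ∈ YnZ M N (wt i m)
      · obtain ⟨k, l, hY, rfl⟩ := hp
        obtain ⟨hk, hki, hl, hlm⟩ := (mem_Yp hiM).1 hY
        rw [hval k l hk hki hl hlm, Htab_eval hk hki hl hlm]
      · rw [hT.1 p hp, Htab_zero hiM hp]

end QAS
end
end

section
/- For every λ ∈ 𝒫 and every a ∈ ℂˣ, the map ℬ₋(λ) → {ℓ-weights} sending T to m_T := ∏_{(i,j)∈Y₋^λ} ⬜T(i,j)_{aq^{2(j−i)+1}} is injective; equivalently, the tableau-sum q-character formula χ_q(V_q⁺(λ;a)) = Σ_{T∈ℬ₋(λ)} m_T is multiplicity free. -/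
open scoped Classical

noncomputable section

namespace QAS

section Proof16

/-! Auxiliary development for statement16: order of vanishing of rational functions,
telescoping, and a counting lemma for monotone functions. -/

noncomputable def ordAt (c : ℂ) (f : RatFunc ℂ) : ℤ :=
  (Polynomial.rootMultiplicity c f.num : ℤ) - Polynomial.rootMultiplicity c f.denom

lemma ordAt_div_poly (c : ℂ) (p r : Polynomial ℂ) (hp : p ≠ 0) (hr : r ≠ 0) :
    ordAt c (algebraMap (Polynomial ℂ) (RatFunc ℂ) p / algebraMap (Polynomial ℂ) (RatFunc ℂ) r)
      = (Polynomial.rootMultiplicity c p : ℤ) - Polynomial.rootMultiplicity c r := by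
  set f : RatFunc ℂ := algebraMap (Polynomial ℂ) (RatFunc ℂ) p
      / algebraMap (Polynomial ℂ) (RatFunc ℂ) r with hf
  have hpz : algebraMap (Polynomial ℂ) (RatFunc ℂ) p ≠ 0 := RatFunc.algebraMap_ne_zero hp
  have hrz : algebraMap (Polynomial ℂ) (RatFunc ℂ) r ≠ 0 := RatFunc.algebraMap_ne_zero hr
  have hfne : f ≠ 0 := div_ne_zero hpz hrz
  have hnum : f.num ≠ 0 := RatFunc.num_ne_zero hfne
  have hden : f.denom ≠ 0 := f.denom_ne_zero
  have h2 : algebraMap (Polynomial ℂ) (RatFunc ℂ) p / algebraMap (Polynomial ℂ) (RatFunc ℂ) r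
      = algebraMap (Polynomial ℂ) (RatFunc ℂ) f.num
        / algebraMap (Polynomial ℂ) (RatFunc ℂ) f.denom := by
    rw [RatFunc.num_div_denom]
  rw [div_eq_div_iff hrz (RatFunc.algebraMap_ne_zero hden)] at h2
  have hcross : p * f.denom = f.num * r := by
    apply RatFunc.algebraMap_injective ℂ
    rw [map_mul, map_mul]; exact h2
  have hmul1 : Polynomial.rootMultiplicity c (p * f.denom)
      = Polynomial.rootMultiplicity c p + Polynomial.rootMultiplicity c f.denom :=
    Polynomial.rootMultiplicity_mul (mul_ne_zero hp hden)
  have hmul2 : Polynomial.rootMultiplicity c (f.num * r)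
      = Polynomial.rootMultiplicity c f.num + Polynomial.rootMultiplicity c r :=
    Polynomial.rootMultiplicity_mul (mul_ne_zero hnum hr)
  rw [hcross, hmul2] at hmul1
  show (Polynomial.rootMultiplicity c f.num : ℤ) - Polynomial.rootMultiplicity c f.denom = _
  omega

lemma ordAt_algebraMap (c : ℂ) (p : Polynomial ℂ) (hp : p ≠ 0) :
    ordAt c (algebraMap (Polynomial ℂ) (RatFunc ℂ) p) = Polynomial.rootMultiplicity c p := by
  have h := ordAt_div_poly c p 1 hp one_ne_zero
  rw [map_one, div_one] at h
  rw [h, ← Polynomial.C_1, Polynomial.rootMultiplicity_C]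
  simp

lemma ordAt_one (c : ℂ) : ordAt c 1 = 0 := by
  have h := ordAt_algebraMap c 1 one_ne_zero
  rw [map_one] at h
  rw [h, ← Polynomial.C_1, Polynomial.rootMultiplicity_C]
  simp

lemma ordAt_mul (c : ℂ) (f g : RatFunc ℂ) (hf : f ≠ 0) (hg : g ≠ 0) :
    ordAt c (f * g) = ordAt c f + ordAt c g := by
  have h : f * g = algebraMap (Polynomial ℂ) (RatFunc ℂ) (f.num * g.num)
      / algebraMap (Polynomial ℂ) (RatFunc ℂ) (f.denom * g.denom) := by
    rw [map_mul, map_mul, ← div_mul_div_comm, RatFunc.num_div_denom, RatFunc.num_div_denom]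
  rw [h, ordAt_div_poly c _ _ (mul_ne_zero (RatFunc.num_ne_zero hf) (RatFunc.num_ne_zero hg))
      (mul_ne_zero f.denom_ne_zero g.denom_ne_zero),
    Polynomial.rootMultiplicity_mul (mul_ne_zero (RatFunc.num_ne_zero hf) (RatFunc.num_ne_zero hg)),
    Polynomial.rootMultiplicity_mul (mul_ne_zero f.denom_ne_zero g.denom_ne_zero)]
  unfold ordAt
  push_cast
  ring

lemma ordAt_inv (c : ℂ) (f : RatFunc ℂ) (hf : f ≠ 0) : ordAt c f⁻¹ = -ordAt c f := by
  have h := ordAt_mul c f f⁻¹ hf (inv_ne_zero hf)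
  rw [mul_inv_cancel₀ hf, ordAt_one] at h
  omega

lemma ordAt_prod {ι : Type*} (c : ℂ) (s : Finset ι) (f : ι → RatFunc ℂ)
    (h : ∀ i ∈ s, f i ≠ 0) : ordAt c (∏ i ∈ s, f i) = ∑ i ∈ s, ordAt c (f i) := by
  classical
  induction s using Finset.cons_induction with
  | empty => simpa using ordAt_one c
  | cons i s his ih =>
    rw [Finset.prod_cons, Finset.sum_cons,
      ordAt_mul c _ _ (h i (Finset.mem_cons_self i s))
        (Finset.prod_ne_zero_iff.mpr fun j hj => h j (Finset.mem_cons_of_mem hj)),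
      ih (fun j hj => h j (Finset.mem_cons_of_mem hj))]

lemma lin_eq (b : ℂ) : (1 : RatFunc ℂ) - Cc b * Z
    = algebraMap (Polynomial ℂ) (RatFunc ℂ) (1 - Polynomial.C b * Polynomial.X) := by
  rw [map_sub, map_one, map_mul, RatFunc.algebraMap_C, RatFunc.algebraMap_X]
  rfl

lemma lin_poly_ne_zero (b : ℂ) : (1 : Polynomial ℂ) - Polynomial.C b * Polynomial.X ≠ 0 := by
  intro h
  have h0 := congrArg (Polynomial.eval 0) h
  simp at h0

lemma lin_ne_zero (b : ℂ) : (1 : RatFunc ℂ) - Cc b * Z ≠ 0 := by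
  rw [lin_eq]
  exact RatFunc.algebraMap_ne_zero (lin_poly_ne_zero b)

lemma ordAt_lin (x b : ℂ) (hb : b ≠ 0) :
    ordAt x (1 - Cc b * Z) = if x = b⁻¹ then 1 else 0 := by
  have hfac : (1 : Polynomial ℂ) - Polynomial.C b * Polynomial.X
      = Polynomial.C (-b) * (Polynomial.X - Polynomial.C b⁻¹) := by
    have hb1 : b * b⁻¹ = 1 := mul_inv_cancel₀ hb
    rw [mul_sub, ← Polynomial.C_mul, neg_mul, hb1, map_neg, map_neg, Polynomial.C_1]
    ring
  rw [lin_eq, ordAt_algebraMap _ _ (lin_poly_ne_zero b), hfac,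
    Polynomial.rootMultiplicity_mul
      (mul_ne_zero (Polynomial.C_ne_zero.mpr (neg_ne_zero.mpr hb))
        (Polynomial.X_sub_C_ne_zero b⁻¹)),
    Polynomial.rootMultiplicity_C, Polynomial.rootMultiplicity_X_sub_C]
  split <;> simp

lemma Cc_ne_zero (u : ℂ) (hu : u ≠ 0) : Cc u ≠ 0 := by
  rw [Cc, ← RatFunc.algebraMap_C]
  exact RatFunc.algebraMap_ne_zero (Polynomial.C_ne_zero.mpr hu)

lemma ordAt_Cc (x u : ℂ) (hu : u ≠ 0) : ordAt x (Cc u) = 0 := by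
  rw [Cc, ← RatFunc.algebraMap_C,
    ordAt_algebraMap _ _ (Polynomial.C_ne_zero.mpr hu), Polynomial.rootMultiplicity_C]
  rfl

lemma ordAt_box_frac (x u b1 b2 : ℂ) (hu : u ≠ 0) (hb1 : b1 ≠ 0) (hb2 : b2 ≠ 0) :
    ordAt x (Cc u * (1 - Cc b1 * Z) / (1 - Cc b2 * Z))
      = (if x = b1⁻¹ then 1 else 0) - (if x = b2⁻¹ then 1 else 0) := by
  rw [div_eq_mul_inv,
    ordAt_mul x _ _ (mul_ne_zero (Cc_ne_zero u hu) (lin_ne_zero b1))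
      (inv_ne_zero (lin_ne_zero b2)),
    ordAt_mul x _ _ (Cc_ne_zero u hu) (lin_ne_zero b1),
    ordAt_inv x _ (lin_ne_zero b2), ordAt_Cc x u hu, ordAt_lin x b1 hb1, ordAt_lin x b2 hb2]
  ring

lemma qzpow_inj (q : ℂ) (hq : q ≠ 0) (hroot : ∀ n : ℕ, 0 < n → q ^ n ≠ 1)
    {m n : ℤ} (h : q ^ m = q ^ n) : m = n := by
  by_contra hne
  wlog hlt : n < m generalizing m n
  · exact this h.symm (Ne.symm hne) (by omega)
  have h1 : q ^ (m - n) = 1 := by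
    rw [zpow_sub₀ hq, h, div_self (zpow_ne_zero _ hq)]
  have h2 : q ^ ((m - n).toNat) = 1 := by
    rw [← zpow_natCast, Int.toNat_of_nonneg (by omega)]
    exact h1
  exact hroot _ (by omega) h2

lemma telescope (f g : ℤ → ℕ) (e0 : ℤ) (hf : ∀ e ≤ e0, f e = 0) (hg : ∀ e ≤ e0, g e = 0)
    (hrel : ∀ e : ℤ, (f e : ℤ) - f (e - 1) = (g e : ℤ) - g (e - 1)) : ∀ e, f e = g e := by
  have key : ∀ n : ℕ, ∀ e : ℤ, e ≤ e0 + n → f e = g e := by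
    intro n
    induction n with
    | zero => intro e he; rw [hf e (by omega), hg e (by omega)]
    | succ n ih =>
      intro e he
      by_cases h : e ≤ e0 + n
      · exact ih e h
      · have h1 := hrel e
        have h2 := ih (e - 1) (by omega)
        omega
  intro e
  exact key (max 0 (e - e0)).toNat e (by omega)

lemma count_le {α : Type*} [DecidableEq α] (S : Finset α) (key : α → ℕ) (f g : α → ℕ)
    (hf : ∀ p ∈ S, ∀ p' ∈ S, key p ≤ key p' → f p' ≤ f p)
    (hg : ∀ p ∈ S, ∀ p' ∈ S, key p ≤ key p' → g p' ≤ g p)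
    (hle : ∀ v, (S.filter (fun p => f p ≤ v)).card = (S.filter (fun p => g p ≤ v)).card) :
    ∀ p ∈ S, f p ≤ g p := by
  intro p hp
  by_contra hlt
  push_neg at hlt
  set v := g p with hv
  have hsub1 : S.filter (fun p' => key p ≤ key p') ⊆ S.filter (fun p' => g p' ≤ v) := by
    intro p' hp'
    rw [Finset.mem_filter] at *
    exact ⟨hp'.1, hg p hp p' hp'.1 hp'.2⟩
  have hsub2 : S.filter (fun p' => f p' ≤ v) ⊆ S.filter (fun p' => key p < key p') := by
    intro p' hp'
    rw [Finset.mem_filter] at *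
    refine ⟨hp'.1, ?_⟩
    by_contra hk
    push_neg at hk
    have hfle := hf p' hp'.1 p hp hk
    have := hp'.2
    omega
  have c1 := Finset.card_le_card hsub1
  have c2 := Finset.card_le_card hsub2
  have c3 : (S.filter (fun p' => key p < key p')).card + 1
      ≤ (S.filter (fun p' => key p ≤ key p')).card := by
    have hins : insert p (S.filter (fun p' => key p < key p'))
        ⊆ S.filter (fun p' => key p ≤ key p') := by
      intro x hx
      rcases Finset.mem_insert.mp hx with rfl | hx
      · exact Finset.mem_filter.mpr ⟨hp, le_refl _⟩
      · have hx' := Finset.mem_filter.mp hx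
        exact Finset.mem_filter.mpr ⟨hx'.1, le_of_lt hx'.2⟩
    have hcard := Finset.card_le_card hins
    rwa [Finset.card_insert_of_notMem (by simp)] at hcard
  have heq := hle v
  omega

lemma count_eq {α : Type*} [DecidableEq α] (S : Finset α) (key : α → ℕ) (f g : α → ℕ)
    (hf : ∀ p ∈ S, ∀ p' ∈ S, key p ≤ key p' → f p' ≤ f p)
    (hg : ∀ p ∈ S, ∀ p' ∈ S, key p ≤ key p' → g p' ≤ g p)
    (hcnt : ∀ v, (S.filter (fun p => f p = v)).card = (S.filter (fun p => g p = v)).card) :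
    ∀ p ∈ S, f p = g p := by
  have hle : ∀ v, (S.filter (fun p => f p ≤ v)).card = (S.filter (fun p => g p ≤ v)).card := by
    intro v
    induction v with
    | zero =>
      have h1 : S.filter (fun p => f p ≤ 0) = S.filter (fun p => f p = 0) := by
        apply Finset.filter_congr; intro p _; simp [Nat.le_zero]
      have h2 : S.filter (fun p => g p ≤ 0) = S.filter (fun p => g p = 0) := by
        apply Finset.filter_congr; intro p _; simp [Nat.le_zero]
      rw [h1, h2]; exact hcnt 0
    | succ v ih =>
      have h1 : S.filter (fun p => f p ≤ v + 1)
          = S.filter (fun p => f p ≤ v) ∪ S.filter (fun p => f p = v + 1) := by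
        ext p
        simp only [Finset.mem_filter, Finset.mem_union]
        constructor
        · rintro ⟨h, hle'⟩
          rcases Nat.lt_or_ge (f p) (v + 1) with h' | h'
          · exact Or.inl ⟨h, by omega⟩
          · exact Or.inr ⟨h, by omega⟩
        · rintro (⟨h, h'⟩ | ⟨h, h'⟩) <;> exact ⟨h, by omega⟩
      have h2 : S.filter (fun p => g p ≤ v + 1)
          = S.filter (fun p => g p ≤ v) ∪ S.filter (fun p => g p = v + 1) := by
        ext p
        simp only [Finset.mem_filter, Finset.mem_union]
        constructor
        · rintro ⟨h, hle'⟩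
          rcases Nat.lt_or_ge (g p) (v + 1) with h' | h'
          · exact Or.inl ⟨h, by omega⟩
          · exact Or.inr ⟨h, by omega⟩
        · rintro (⟨h, h'⟩ | ⟨h, h'⟩) <;> exact ⟨h, by omega⟩
      have hd1 : Disjoint (S.filter (fun p => f p ≤ v)) (S.filter (fun p => f p = v + 1)) := by
        rw [Finset.disjoint_left]
        intro x hx hx'
        have := (Finset.mem_filter.mp hx).2
        have := (Finset.mem_filter.mp hx').2
        omega
      have hd2 : Disjoint (S.filter (fun p => g p ≤ v)) (S.filter (fun p => g p = v + 1)) := by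
        rw [Finset.disjoint_left]
        intro x hx hx'
        have := (Finset.mem_filter.mp hx).2
        have := (Finset.mem_filter.mp hx').2
        omega
      rw [h1, h2, Finset.card_union_of_disjoint hd1, Finset.card_union_of_disjoint hd2,
        ih, hcnt (v + 1)]
  intro p hp
  exact le_antisymm (count_le S key f g hf hg hle p hp)
    (count_le S key g f hg hf (fun v => (hle v).symm) p hp)

lemma qq_ne_zero (M : ℕ) (q : ℂ) (hq : q ≠ 0) (t : ℕ) : qq M q t ≠ 0 := by
  unfold qq; split
  · exact hq
  · exact inv_ne_zero hq

lemma theta_ne_zero (M N : ℕ) (q : ℂ) (hq : q ≠ 0) (t : ℕ) : theta M N q t ≠ 0 := by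
  unfold theta; split <;> exact zpow_ne_zero _ hq

/-- the point at which we measure orders of vanishing -/
def Pt (M N : ℕ) (q a : ℂ) (j : ℕ) (e : ℤ) : ℂ :=
  (a * (theta M N q j)⁻¹ * q ^ (2 * e))⁻¹

lemma Pt_ne_zero (M N : ℕ) (q a : ℂ) (hq : q ≠ 0) (ha : a ≠ 0) (j : ℕ) (e : ℤ) :
    Pt M N q a j e ≠ 0 :=
  inv_ne_zero (mul_ne_zero (mul_ne_zero ha (inv_ne_zero (theta_ne_zero M N q hq j)))
    (zpow_ne_zero _ hq))

lemma Pt_inj (M N : ℕ) (q a : ℂ) (hq : q ≠ 0) (hroot : ∀ n : ℕ, 0 < n → q ^ n ≠ 1)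
    (ha : a ≠ 0) (j : ℕ) {e e' : ℤ} :
    Pt M N q a j e = Pt M N q a j e' ↔ e = e' := by
  constructor
  · intro h
    have h2 := inv_injective h
    have h3 : (q : ℂ) ^ (2 * e) = q ^ (2 * e') :=
      mul_left_cancel₀ (mul_ne_zero ha (inv_ne_zero (theta_ne_zero M N q hq j))) h2
    have := qzpow_inj q hq hroot h3
    omega
  · rintro rfl; rfl

/-- bounding rectangle for the Young diagram -/
def rect (M N : ℕ) (lam : ℕ → ℕ) : Finset (ℕ × ℕ) :=
  Finset.Icc 1 (M + lam (M + 1)) ×ˢ Finset.Icc 1 (max (lam 1) N)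

/-- number of cells of the diagram on diagonal `d` with entry `j` -/
def cnt (M N : ℕ) (lam : ℕ → ℕ) (T : ℤ × ℤ → ℕ) (j : ℕ) (d : ℤ) : ℕ :=
  ((rect M N lam).filter (fun p => ((p.1, p.2) ∈ Yp M N lam ∧ (p.1 : ℤ) - (p.2 : ℤ) = d)
    ∧ T (-(p.1 : ℤ), -(p.2 : ℤ)) = j)).card

lemma cnt_zero (M N : ℕ) (lam : ℕ → ℕ) (T : ℤ × ℤ → ℕ) (j : ℕ) (e : ℤ)
    (he : e ≤ -(max (lam 1) N : ℤ)) : cnt M N lam T j e = 0 := by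
  unfold cnt
  rw [Finset.card_eq_zero, Finset.filter_eq_empty_iff]
  intro p hp hcond
  obtain ⟨⟨_, hd⟩, -⟩ := hcond
  rw [rect, Finset.mem_product, Finset.mem_Icc, Finset.mem_Icc] at hp
  omega

lemma Yp_mem_rect (M N : ℕ) (lam : ℕ → ℕ) (hlam : inP M N lam) {k l : ℕ}
    (h : (k, l) ∈ Yp M N lam) : (k, l) ∈ rect M N lam := by
  obtain ⟨h0, hbig, hdec1, hdec2, hhook⟩ := hlam
  simp only [Yp, Set.mem_setOf_eq] at h
  obtain ⟨hk1, hl1, hcase⟩ := h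
  rw [rect, Finset.mem_product, Finset.mem_Icc, Finset.mem_Icc]
  rcases hcase with ⟨hkM, hl⟩ | ⟨hkM, hlN, hk⟩
  · refine ⟨⟨hk1, by omega⟩, hl1, ?_⟩
    have h2 : lam k ≤ lam 1 := hdec1 1 k le_rfl hk1 hkM
    have h3 := le_max_left (lam 1) N
    omega
  · refine ⟨⟨hk1, ?_⟩, hl1, ?_⟩
    · have h2 : lam (M + l) ≤ lam (M + 1) := hdec2 (M + 1) (M + l) le_rfl (by omega) (by omega)
      omega
    · have h3 := le_max_right (lam 1) N
      omega

lemma box_fst (M N : ℕ) (q : ℂ) (t : ℕ) (b : ℂ) (j : ℕ) :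
    (box M N q t b).1 j = if j = t then
      Cc (qq M q t) * (1 - Cc (b * (theta M N q t)⁻¹ * (qq M q t)⁻¹) * Z) /
        (1 - Cc (b * (theta M N q t)⁻¹ * qq M q t) * Z)
    else 1 := rfl

lemma ord_mTgen (M N : ℕ) (q : ℂ) (hq : q ≠ 0) (hroot : ∀ n : ℕ, 0 < n → q ^ n ≠ 1)
    (lam : ℕ → ℕ) (a : ℂ) (ha : a ≠ 0) (T : ℤ × ℤ → ℕ) (j : ℕ) (e : ℤ) :
    ordAt (Pt M N q a j e) ((mTgen M N q lam a T).1 j)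
      = if j ≤ M then (cnt M N lam T j e : ℤ) - (cnt M N lam T j (e - 1) : ℤ)
        else (cnt M N lam T j (e - 1) : ℤ) - (cnt M N lam T j e : ℤ) := by
  have hθ := theta_ne_zero M N q hq j
  have hcomp : (mTgen M N q lam a T).1 j
      = ∏ p ∈ rect M N lam,
          (if (p.1, p.2) ∈ Yp M N lam then
            (box M N q (T (-(p.1 : ℤ), -(p.2 : ℤ)))
              (a * q ^ (2 * ((p.1 : ℤ) - (p.2 : ℤ)) + 1))).1 j
          else 1) := by
    rw [mTgen, rect, Finset.prod_product]
    simp only [Prod.fst_prod, Finset.prod_apply, apply_ite Prod.fst,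
      apply_ite (fun f : ℕ → RatFunc ℂ => f j), Prod.fst_one, Pi.one_apply]
  have hnz : ∀ p ∈ rect M N lam,
      (if (p.1, p.2) ∈ Yp M N lam then
        (box M N q (T (-(p.1 : ℤ), -(p.2 : ℤ)))
          (a * q ^ (2 * ((p.1 : ℤ) - (p.2 : ℤ)) + 1))).1 j
      else 1) ≠ 0 := by
    intro p _
    split_ifs with hYp
    · rw [box_fst]
      split_ifs with hjt
      · exact div_ne_zero (mul_ne_zero (Cc_ne_zero _ (qq_ne_zero M q hq _)) (lin_ne_zero _))
          (lin_ne_zero _)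
      · exact one_ne_zero
    · exact one_ne_zero
  rw [hcomp, ordAt_prod _ _ _ hnz]
  by_cases hjM : j ≤ M
  · rw [if_pos hjM]
    have hqqj : qq M q j = q := by rw [qq, if_pos hjM]
    have hsum : ∀ p ∈ rect M N lam,
        ordAt (Pt M N q a j e)
          (if (p.1, p.2) ∈ Yp M N lam then
            (box M N q (T (-(p.1 : ℤ), -(p.2 : ℤ)))
              (a * q ^ (2 * ((p.1 : ℤ) - (p.2 : ℤ)) + 1))).1 j
          else 1)
        = (if ((p.1, p.2) ∈ Yp M N lam ∧ (p.1 : ℤ) - (p.2 : ℤ) = e)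
              ∧ T (-(p.1 : ℤ), -(p.2 : ℤ)) = j then (1 : ℤ) else 0)
          - (if ((p.1, p.2) ∈ Yp M N lam ∧ (p.1 : ℤ) - (p.2 : ℤ) = e - 1)
              ∧ T (-(p.1 : ℤ), -(p.2 : ℤ)) = j then (1 : ℤ) else 0) := by
      intro p _
      by_cases hYp : (p.1, p.2) ∈ Yp M N lam
      swap
      · rw [if_neg hYp, ordAt_one, if_neg (by tauto), if_neg (by tauto)]
        ring
      rw [if_pos hYp, box_fst]
      by_cases hjt : j = T (-(p.1 : ℤ), -(p.2 : ℤ))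
      swap
      · rw [if_neg hjt, ordAt_one,
          if_neg (fun hh => hjt hh.2.symm), if_neg (fun hh => hjt hh.2.symm)]
        ring
      rw [if_pos hjt, ← hjt]
      set d : ℤ := (p.1 : ℤ) - (p.2 : ℤ) with hdd
      have hz1 : (q : ℂ) ^ (2 * d + 1) = q ^ (2 * d) * q := by
        rw [zpow_add₀ hq, zpow_one]
      have hb1 : a * q ^ (2 * d + 1) * (theta M N q j)⁻¹ * (qq M q j)⁻¹
          = (Pt M N q a j d)⁻¹ := by
        rw [hqqj, Pt, inv_inv, hz1]
        field_simp
      have hb2 : a * q ^ (2 * d + 1) * (theta M N q j)⁻¹ * qq M q j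
          = (Pt M N q a j (d + 1))⁻¹ := by
        rw [hqqj, Pt, inv_inv, hz1,
          show (2 * (d + 1) : ℤ) = 2 * d + 1 + 1 by ring, zpow_add₀ hq, zpow_one, hz1]
        ring
      rw [hb1, hb2, ordAt_box_frac _ _ _ _ (qq_ne_zero M q hq j)
          (inv_ne_zero (Pt_ne_zero M N q a hq ha j d))
          (inv_ne_zero (Pt_ne_zero M N q a hq ha j (d + 1))),
        inv_inv, inv_inv]
      have he1 : (Pt M N q a j e = Pt M N q a j d) ↔ (d = e) :=
        (Pt_inj M N q a hq hroot ha j).trans ⟨Eq.symm, Eq.symm⟩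
      have he2 : (Pt M N q a j e = Pt M N q a j (d + 1)) ↔ (d = e - 1) :=
        (Pt_inj M N q a hq hroot ha j).trans ⟨by omega, by omega⟩
      simp [he1, he2, hYp]
    rw [Finset.sum_congr rfl hsum, Finset.sum_sub_distrib, Finset.sum_boole, Finset.sum_boole]
    rfl
  · rw [if_neg hjM]
    have hqqj : qq M q j = q⁻¹ := by rw [qq, if_neg hjM]
    have hsum : ∀ p ∈ rect M N lam,
        ordAt (Pt M N q a j e)
          (if (p.1, p.2) ∈ Yp M N lam then
            (box M N q (T (-(p.1 : ℤ), -(p.2 : ℤ)))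
              (a * q ^ (2 * ((p.1 : ℤ) - (p.2 : ℤ)) + 1))).1 j
          else 1)
        = (if ((p.1, p.2) ∈ Yp M N lam ∧ (p.1 : ℤ) - (p.2 : ℤ) = e - 1)
              ∧ T (-(p.1 : ℤ), -(p.2 : ℤ)) = j then (1 : ℤ) else 0)
          - (if ((p.1, p.2) ∈ Yp M N lam ∧ (p.1 : ℤ) - (p.2 : ℤ) = e)
              ∧ T (-(p.1 : ℤ), -(p.2 : ℤ)) = j then (1 : ℤ) else 0) := by
      intro p _
      by_cases hYp : (p.1, p.2) ∈ Yp M N lam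
      swap
      · rw [if_neg hYp, ordAt_one, if_neg (by tauto), if_neg (by tauto)]
        ring
      rw [if_pos hYp, box_fst]
      by_cases hjt : j = T (-(p.1 : ℤ), -(p.2 : ℤ))
      swap
      · rw [if_neg hjt, ordAt_one,
          if_neg (fun hh => hjt hh.2.symm), if_neg (fun hh => hjt hh.2.symm)]
        ring
      rw [if_pos hjt, ← hjt]
      set d : ℤ := (p.1 : ℤ) - (p.2 : ℤ) with hdd
      have hz1 : (q : ℂ) ^ (2 * d + 1) = q ^ (2 * d) * q := by
        rw [zpow_add₀ hq, zpow_one]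
      have hb1 : a * q ^ (2 * d + 1) * (theta M N q j)⁻¹ * (qq M q j)⁻¹
          = (Pt M N q a j (d + 1))⁻¹ := by
        rw [hqqj, inv_inv, Pt, inv_inv, hz1,
          show (2 * (d + 1) : ℤ) = 2 * d + 1 + 1 by ring, zpow_add₀ hq, zpow_one, hz1]
        ring
      have hb2 : a * q ^ (2 * d + 1) * (theta M N q j)⁻¹ * qq M q j
          = (Pt M N q a j d)⁻¹ := by
        rw [hqqj, Pt, inv_inv, hz1]
        field_simp
      rw [hb1, hb2, ordAt_box_frac _ _ _ _ (qq_ne_zero M q hq j)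
          (inv_ne_zero (Pt_ne_zero M N q a hq ha j (d + 1)))
          (inv_ne_zero (Pt_ne_zero M N q a hq ha j d)),
        inv_inv, inv_inv]
      have he1 : (Pt M N q a j e = Pt M N q a j d) ↔ (d = e) :=
        (Pt_inj M N q a hq hroot ha j).trans ⟨Eq.symm, Eq.symm⟩
      have he2 : (Pt M N q a j e = Pt M N q a j (d + 1)) ↔ (d = e - 1) :=
        (Pt_inj M N q a hq hroot ha j).trans ⟨by omega, by omega⟩
      simp [he1, he2, hYp]
    rw [Finset.sum_congr rfl hsum, Finset.sum_sub_distrib, Finset.sum_boole, Finset.sum_boole]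
    rfl

end Proof16

/-- the tableau-sum `q`-character formula is multiplicity free, i.e.
`T ↦ m_T` is injective on `ℬ₋(λ)`. -/
theorem statement16 (M N : ℕ) (hM : 1 ≤ M) (hN : 1 ≤ N) (q : ℂ) (hq : q ≠ 0)
    (hroot : ∀ n : ℕ, 0 < n → q ^ n ≠ 1) (lam : ℕ → ℕ) (hlam : inP M N lam)
    (a : ℂ) (ha : a ≠ 0) :
    Set.InjOn (mTgen M N q lam a) (Bneg M N lam) := by
  intro T hT T' hT' hEq
  obtain ⟨hT0, -, hTmono, -, -⟩ := hT
  obtain ⟨hT'0, -, hT'mono, -, -⟩ := hT'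
  have hcnt : ∀ (j : ℕ) (d : ℤ), cnt M N lam T j d = cnt M N lam T' j d := by
    intro j
    refine telescope _ _ (-(max (lam 1) N : ℤ))
      (fun e he => cnt_zero M N lam T j e he) (fun e he => cnt_zero M N lam T' j e he) ?_
    intro e
    have h1 := ord_mTgen M N q hq hroot lam a ha T j e
    have h2 := ord_mTgen M N q hq hroot lam a ha T' j e
    rw [hEq] at h1
    rw [h1] at h2
    by_cases hjM : j ≤ M
    · rw [if_pos hjM, if_pos hjM] at h2; omega
    · rw [if_neg hjM, if_neg hjM] at h2; omega
  funext p
  by_cases hp : p ∈ YnZ M N lam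
  swap
  · rw [hT0 p hp, hT'0 p hp]
  obtain ⟨k, l, hkl, rfl⟩ := hp
  set d : ℤ := (k : ℤ) - (l : ℤ) with hd
  set S : Finset (ℕ × ℕ) := (rect M N lam).filter
      (fun p => (p.1, p.2) ∈ Yp M N lam ∧ (p.1 : ℤ) - (p.2 : ℤ) = d) with hS
  have hmemS : (k, l) ∈ S := by
    rw [hS, Finset.mem_filter]
    exact ⟨Yp_mem_rect M N lam hlam hkl, hkl, rfl⟩
  have hmono1 : ∀ p ∈ S, ∀ p' ∈ S, p.1 ≤ p'.1 →
      T (-(p'.1 : ℤ), -(p'.2 : ℤ)) ≤ T (-(p.1 : ℤ), -(p.2 : ℤ)) := by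
    intro p hp p' hp' hle
    rw [hS, Finset.mem_filter] at hp hp'
    have hd1 := hp.2.2
    have hd2 := hp'.2.2
    exact hTmono (-(p'.1 : ℤ), -(p'.2 : ℤ)) ⟨p'.1, p'.2, hp'.2.1, rfl⟩
      (-(p.1 : ℤ), -(p.2 : ℤ)) ⟨p.1, p.2, hp.2.1, rfl⟩
      (by simp only; omega) (by simp only; omega)
  have hmono2 : ∀ p ∈ S, ∀ p' ∈ S, p.1 ≤ p'.1 →
      T' (-(p'.1 : ℤ), -(p'.2 : ℤ)) ≤ T' (-(p.1 : ℤ), -(p.2 : ℤ)) := by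
    intro p hp p' hp' hle
    rw [hS, Finset.mem_filter] at hp hp'
    have hd1 := hp.2.2
    have hd2 := hp'.2.2
    exact hT'mono (-(p'.1 : ℤ), -(p'.2 : ℤ)) ⟨p'.1, p'.2, hp'.2.1, rfl⟩
      (-(p.1 : ℤ), -(p.2 : ℤ)) ⟨p.1, p.2, hp.2.1, rfl⟩
      (by simp only; omega) (by simp only; omega)
  have hcounts : ∀ v, (S.filter (fun p => T (-(p.1 : ℤ), -(p.2 : ℤ)) = v)).card
      = (S.filter (fun p => T' (-(p.1 : ℤ), -(p.2 : ℤ)) = v)).card := by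
    intro v
    rw [hS, Finset.filter_filter, Finset.filter_filter]
    exact hcnt v d
  exact count_eq S Prod.fst _ _ hmono1 hmono2 hcounts (k, l) hmemS

end QAS
end
end
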